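/- arXiv:1406.4652 — 3 statements merged into one kernel-verified Lean document; each statement's English description precedes it below -/
import Mathlib

section
/- Let r > m > 0 be coprime integers with rm even, and set a = r − m, b = 0, c = r + m. Then there exists a smooth diffeomorphism φ: ℝ² → ℝ² such that the immersions Ĩ_{r,m} and F_{a,b,c} ∘ φ induce the same first fundamental form: for every point p ∈ ℝ² and all vectors v, w ∈ ℝ², ⟨D(F_{a,b,c} ∘ φ)(p)v, D(F_{a,b,c} ∘ φ)(p)w⟩ = ⟨D Ĩ_{r,m}(p)v, D Ĩ_{r,m}(p)w⟩. (Hence the bipolar Lawson torus τ̃_{r,m} is isometric to the generalized Lawson surface T_{r−m,0,r+m}.) -/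
open Real

open scoped RealInnerProductSpace

/-- The bipolar Lawson immersion `Ĩ_{r,m} : ℝ² → ℝ⁶`, whose image is the bipolar
Lawson surface `τ̃_{r,m}`. -/
noncomputable def bipolarLawson (r m : ℝ) : ℝ × ℝ → EuclideanSpace ℝ (Fin 6) := fun p =>
  (Real.sqrt (r^2 * Real.cos p.2 ^ 2 + m^2 * Real.sin p.2 ^ 2))⁻¹ •
    (WithLp.toLp 2 ![-(m * Real.sin p.2 * Real.cos p.2),
       r * Real.sin p.2 * Real.cos p.2,
       -(r * Real.cos p.2 ^ 2 * Real.sin (m * p.1) * Real.cos (r * p.1))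
         - m * Real.sin p.2 ^ 2 * Real.sin (r * p.1) * Real.cos (m * p.1),
       r * Real.cos p.2 ^ 2 * Real.cos (m * p.1) * Real.sin (r * p.1)
         + m * Real.sin p.2 ^ 2 * Real.cos (r * p.1) * Real.sin (m * p.1),
       -(r * Real.cos p.2 ^ 2 * Real.sin (m * p.1) * Real.sin (r * p.1))
         + m * Real.sin p.2 ^ 2 * Real.cos (r * p.1) * Real.cos (m * p.1),
       r * Real.cos p.2 ^ 2 * Real.cos (m * p.1) * Real.cos (r * p.1)
         - m * Real.sin p.2 ^ 2 * Real.sin (r * p.1) * Real.sin (m * p.1)] :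
      EuclideanSpace ℝ (Fin 6))

/-- The generalized Lawson immersion `F_{a,b,c} : ℝ² → ℂ³ ≅ ℝ⁶`, whose image (for
suitable integers `a`, `b`, `c`) is the generalized Lawson surface `T_{a,b,c}`. -/
noncomputable def genLawson (a b c : ℝ) : ℝ × ℝ → EuclideanSpace ℝ (Fin 6) := fun p =>
  WithLp.toLp 2 ![Real.sqrt ((b^2 + c^2 - a^2) / (2 * (c^2 - a^2))) * Real.cos (a * p.1) * Real.sin p.2,
    Real.sqrt ((b^2 + c^2 - a^2) / (2 * (c^2 - a^2))) * Real.sin (a * p.1) * Real.sin p.2,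
    Real.sqrt ((a^2 + c^2 - b^2) / (2 * (c^2 - b^2))) * Real.cos (b * p.1) * Real.cos p.2,
    Real.sqrt ((a^2 + c^2 - b^2) / (2 * (c^2 - b^2))) * Real.sin (b * p.1) * Real.cos p.2,
    Real.sqrt ((c^2 - a^2 - b^2) / (2 * (c^2 - b^2))) * Real.cos (c * p.1) *
      Real.sqrt (1 - (b^2 - a^2) / (c^2 - a^2) * Real.sin p.2 ^ 2),
    Real.sqrt ((c^2 - a^2 - b^2) / (2 * (c^2 - b^2))) * Real.sin (c * p.1) *
      Real.sqrt (1 - (b^2 - a^2) / (c^2 - a^2) * Real.sin p.2 ^ 2)]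


/-! ### Auxiliary constructions -/

namespace BipolarAux

open Filter

noncomputable def yfun (r m v : ℝ) : ℝ :=
  π/2 - 2*v - Real.arctan ((m - r) * (Real.sin v * Real.cos v) /
    (r * Real.cos v ^ 2 + m * Real.sin v ^ 2))

variable {r m : ℝ}

lemma Dpos (hm : 0 < m) (hmr : m < r) (v : ℝ) : 0 < r * cos v ^ 2 + m * sin v ^ 2 := by
  nlinarith [sin_sq_add_cos_sq v, sq_nonneg (cos v), sq_nonneg (sin v)]

lemma Rpos (hm : 0 < m) (hmr : m < r) (v : ℝ) : 0 < r^2 * cos v ^ 2 + m^2 * sin v ^ 2 := by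
  nlinarith [sin_sq_add_cos_sq v, sq_nonneg (cos v), sq_nonneg (sin v), mul_pos hm hm,
    mul_pos (sub_pos.2 hmr) (by linarith : (0:ℝ) < r + m)]

lemma sin_yfun (hm : 0 < m) (hmr : m < r) (v : ℝ) :
    Real.sin (yfun r m v) = (r * cos v ^ 2 - m * sin v ^ 2) /
      Real.sqrt (r^2 * cos v ^ 2 + m^2 * sin v ^ 2) := by
  have hD := Dpos hm hmr v
  have hR := Rpos hm hmr v
  set x := (m - r) * (Real.sin v * Real.cos v) / (r * Real.cos v ^ 2 + m * Real.sin v ^ 2) with hx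
  have hsq : 1 + x ^ 2 = (r^2 * cos v ^ 2 + m^2 * sin v ^ 2) / (r * cos v ^ 2 + m * sin v ^ 2)^2 := by
    rw [hx]; field_simp
    linear_combination (r^2 * cos v ^ 2 + m^2 * sin v ^ 2) * (sin_sq_add_cos_sq v)
  have hsqrt : Real.sqrt (1 + x^2)
      = Real.sqrt (r^2 * cos v ^ 2 + m^2 * sin v ^ 2) / (r * cos v ^ 2 + m * sin v ^ 2) := by
    rw [hsq, Real.sqrt_div hR.le, Real.sqrt_sq hD.le]
  have h1 : yfun r m v = π/2 - (2*v + arctan x) := by rw [yfun, hx]; ring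
  have hs : (0:ℝ) < Real.sqrt (r^2 * cos v ^ 2 + m^2 * sin v ^ 2) := Real.sqrt_pos.2 hR
  have hsq2 : Real.sqrt (r^2 * cos v ^ 2 + m^2 * sin v ^ 2) ^ 2
      = r^2 * cos v ^ 2 + m^2 * sin v ^ 2 := Real.sq_sqrt hR.le
  rw [h1, Real.sin_pi_div_two_sub, Real.cos_add, Real.cos_arctan, Real.sin_arctan, hsqrt,
    Real.cos_two_mul', Real.sin_two_mul, hx]
  field_simp
  rw [div_eq_div_iff (mul_pos (Real.sqrt_pos.2 (by linarith)) (by linarith)).ne'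
    (Real.sqrt_pos.2 (by linarith)).ne']
  linear_combination ((cos v ^ 2 * r + sin v ^ 2 * m) * Real.sqrt (cos v ^ 2 * r ^ 2 + sin v ^ 2 * m ^ 2)
    * (r * cos v^2 - m * sin v^2)) * sin_sq_add_cos_sq v

lemma cos_yfun (hm : 0 < m) (hmr : m < r) (v : ℝ) :
    Real.cos (yfun r m v) = (r + m) * (sin v * cos v) /
      Real.sqrt (r^2 * cos v ^ 2 + m^2 * sin v ^ 2) := by
  have hD := Dpos hm hmr v
  have hR := Rpos hm hmr v
  set x := (m - r) * (Real.sin v * Real.cos v) / (r * Real.cos v ^ 2 + m * Real.sin v ^ 2) with hx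
  have hsq : 1 + x ^ 2 = (r^2 * cos v ^ 2 + m^2 * sin v ^ 2) / (r * cos v ^ 2 + m * sin v ^ 2)^2 := by
    rw [hx]; field_simp
    linear_combination (r^2 * cos v ^ 2 + m^2 * sin v ^ 2) * (sin_sq_add_cos_sq v)
  have hsqrt : Real.sqrt (1 + x^2)
      = Real.sqrt (r^2 * cos v ^ 2 + m^2 * sin v ^ 2) / (r * cos v ^ 2 + m * sin v ^ 2) := by
    rw [hsq, Real.sqrt_div hR.le, Real.sqrt_sq hD.le]
  have h1 : yfun r m v = π/2 - (2*v + arctan x) := by rw [yfun, hx]; ring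
  have hs : (0:ℝ) < Real.sqrt (r^2 * cos v ^ 2 + m^2 * sin v ^ 2) := Real.sqrt_pos.2 hR
  have hsq2 : Real.sqrt (r^2 * cos v ^ 2 + m^2 * sin v ^ 2) ^ 2
      = r^2 * cos v ^ 2 + m^2 * sin v ^ 2 := Real.sq_sqrt hR.le
  rw [h1, Real.cos_pi_div_two_sub, Real.sin_add, Real.cos_arctan, Real.sin_arctan, hsqrt,
    Real.cos_two_mul', Real.sin_two_mul, hx]
  field_simp
  rw [div_eq_div_iff (mul_pos (Real.sqrt_pos.2 (by linarith)) (by linarith)).ne'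
    (Real.sqrt_pos.2 (by linarith)).ne']
  linear_combination ((cos v ^ 2 * r + sin v ^ 2 * m) * Real.sqrt (cos v ^ 2 * r ^ 2 + sin v ^ 2 * m ^ 2)
    * (sin v * cos v * (r + m))) * sin_sq_add_cos_sq v

noncomputable def yderiv (r m v : ℝ) : ℝ :=
  -2 + (r - m) * (r * cos v ^ 2 - m * sin v ^ 2) / (r^2 * cos v ^ 2 + m^2 * sin v ^ 2)

lemma yfun_hasDerivAt (hm : 0 < m) (hmr : m < r) (v : ℝ) :
    HasDerivAt (yfun r m) (yderiv r m v) v := by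
  have hD := Dpos hm hmr v
  have hR := Rpos hm hmr v
  have hN : HasDerivAt (fun v : ℝ => (m - r) * (Real.sin v * Real.cos v))
      ((m - r) * (Real.cos v * Real.cos v + Real.sin v * (-Real.sin v))) v :=
    ((Real.hasDerivAt_sin v).mul (Real.hasDerivAt_cos v)).const_mul _
  have hDd : HasDerivAt (fun v : ℝ => r * Real.cos v ^ 2 + m * Real.sin v ^ 2)
      (r * ((2:ℕ) * Real.cos v ^ 1 * -Real.sin v) + m * ((2:ℕ) * Real.sin v ^ 1 * Real.cos v)) v :=
    (((Real.hasDerivAt_cos v).pow 2).const_mul r).add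
      (((Real.hasDerivAt_sin v).pow 2).const_mul m)
  have hg := (hN.div hDd hD.ne').arctan
  have hy := ((hasDerivAt_const v (π/2)).sub ((hasDerivAt_id v).const_mul 2)).sub hg
  convert (show HasDerivAt (yfun r m) _ v from hy) using 1
  have hone : 1 + ((m - r) * (Real.sin v * Real.cos v) /
      (r * Real.cos v ^ 2 + m * Real.sin v ^ 2)) ^ 2
      = (r^2 * cos v ^ 2 + m^2 * sin v ^ 2) / (r * cos v ^ 2 + m * sin v ^ 2)^2 := by
    field_simp
    linear_combination (r^2 * cos v ^ 2 + m^2 * sin v ^ 2) * (sin_sq_add_cos_sq v)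
  rw [yderiv, Pi.div_apply, hone]
  field_simp
  linear_combination ((m - r) * (r*cos v^2 - m*sin v^2)) * sin_sq_add_cos_sq v

lemma yderiv_neg (hm : 0 < m) (hmr : m < r) (v : ℝ) : yderiv r m v < 0 := by
  have hR := Rpos hm hmr v
  have h : (r - m) * (r * cos v ^ 2 - m * sin v ^ 2)
      < 2 * (r^2 * cos v ^ 2 + m^2 * sin v ^ 2) := by
    nlinarith [sin_sq_add_cos_sq v, mul_pos (hm.trans hmr) hm, sq_nonneg (sin v),
      sq_nonneg (cos v), mul_pos (hm.trans hmr) (hm.trans hmr), mul_pos hm hm]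
  have := (div_lt_iff₀ hR).2 h
  rw [yderiv]
  linarith

lemma yfun_contDiff (hm : 0 < m) (hmr : m < r) : ContDiff ℝ (⊤ : ℕ∞) (yfun r m) := by
  refine (contDiff_const.sub (contDiff_const.mul contDiff_id)).sub
    (Real.contDiff_arctan.comp (ContDiff.div ?_ ?_ fun v => (Dpos hm hmr v).ne'))
  · exact contDiff_const.mul (Real.contDiff_sin.mul Real.contDiff_cos)
  · exact (contDiff_const.mul (Real.contDiff_cos.pow 2)).add
      (contDiff_const.mul (Real.contDiff_sin.pow 2))

lemma yfun_strictAnti (hm : 0 < m) (hmr : m < r) : StrictAnti (yfun r m) :=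
  strictAnti_of_deriv_neg fun v => by
    rw [(yfun_hasDerivAt hm hmr v).deriv]; exact yderiv_neg hm hmr v

lemma yfun_surjective (hm : 0 < m) (hmr : m < r) : Function.Surjective (yfun r m) := by
  have hcont : Continuous (yfun r m) := (yfun_contDiff hm hmr).continuous
  refine hcont.surjective' ?_ ?_
  · refine tendsto_atTop_mono (fun v => ?_) ((tendsto_neg_atBot_atTop).const_mul_atTop two_pos)
    have := Real.arctan_lt_pi_div_two ((m - r) * (Real.sin v * Real.cos v) /
      (r * Real.cos v ^ 2 + m * Real.sin v ^ 2))
    rw [yfun]; linarith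
  · refine tendsto_atBot_mono (f := fun v => π + 2 * (-v)) (fun v => ?_) ?_
    · have := Real.neg_pi_div_two_lt_arctan ((m - r) * (Real.sin v * Real.cos v) /
        (r * Real.cos v ^ 2 + m * Real.sin v ^ 2))
      have hpi := Real.pi_pos
      rw [yfun]; linarith
    · exact tendsto_atBot_add_const_left _ π ((tendsto_neg_atTop_atBot).const_mul_atBot two_pos)

noncomputable def yHomeo (r m : ℝ) (hm : 0 < m) (hmr : m < r) : ℝ ≃ₜ ℝ :=
  (Homeomorph.neg ℝ).trans (StrictMono.orderIsoOfSurjective (fun v => yfun r m (-v))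
    (fun a b hab => (yfun_strictAnti hm hmr) (neg_lt_neg hab))
    (fun y => by
      obtain ⟨v, hv⟩ := yfun_surjective hm hmr y
      exact ⟨-v, by simpa using hv⟩)).toHomeomorph

lemma yHomeo_apply (hm : 0 < m) (hmr : m < r) : ⇑(yHomeo r m hm hmr) = yfun r m := by
  funext v
  simp [yHomeo]
  show yfun r m (-(-v)) = _
  simp

lemma yHomeo_symm_contDiff (hm : 0 < m) (hmr : m < r) :
    ContDiff ℝ (⊤ : ℕ∞) ⇑(yHomeo r m hm hmr).symm := by
  have hco := yHomeo_apply hm hmr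
  refine Homeomorph.contDiff_symm_deriv (yHomeo r m hm hmr)
    (f' := yderiv r m) (fun x => (yderiv_neg hm hmr x).ne) (fun x => ?_) ?_
  · rw [hco]; exact yfun_hasDerivAt hm hmr x
  · rw [hco]; exact yfun_contDiff hm hmr

lemma cv0 {α : Type*} (a b c d e f : α) : ![a,b,c,d,e,f] 0 = a := rfl
lemma cv1 {α : Type*} (a b c d e f : α) : ![a,b,c,d,e,f] 1 = b := rfl
lemma cv2 {α : Type*} (a b c d e f : α) : ![a,b,c,d,e,f] 2 = c := rfl
lemma cv3 {α : Type*} (a b c d e f : α) : ![a,b,c,d,e,f] 3 = d := rfl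
lemma cv4 {α : Type*} (a b c d e f : α) : ![a,b,c,d,e,f] 4 = e := rfl
lemma cv5 {α : Type*} (a b c d e f : α) : ![a,b,c,d,e,f] 5 = f := rfl
lemma fe0 : (⟨0, by omega⟩ : Fin 6) = 0 := rfl
lemma fe1 : (⟨1, by omega⟩ : Fin 6) = 1 := rfl
lemma fe2 : (⟨2, by omega⟩ : Fin 6) = 2 := rfl
lemma fe3 : (⟨3, by omega⟩ : Fin 6) = 3 := rfl
lemma fe4 : (⟨4, by omega⟩ : Fin 6) = 4 := rfl
lemma fe5 : (⟨5, by omega⟩ : Fin 6) = 5 := rfl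

noncomputable def Afun (r m : ℝ) (x : EuclideanSpace ℝ (Fin 6)) : EuclideanSpace ℝ (Fin 6) :=
  WithLp.toLp 2 ![(x 5 - x 4) / Real.sqrt 2,
    (x 2 + x 3) / Real.sqrt 2,
    (-m * x 0 + r * x 1) / Real.sqrt (r^2 + m^2),
    (r * x 0 + m * x 1) / Real.sqrt (r^2 + m^2),
    (x 4 + x 5) / Real.sqrt 2,
    (x 3 - x 2) / Real.sqrt 2]

noncomputable def Ainv (r m : ℝ) (y : EuclideanSpace ℝ (Fin 6)) : EuclideanSpace ℝ (Fin 6) :=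
  WithLp.toLp 2 ![(-m * y 2 + r * y 3) / Real.sqrt (r^2 + m^2),
    (r * y 2 + m * y 3) / Real.sqrt (r^2 + m^2),
    (y 1 - y 5) / Real.sqrt 2,
    (y 1 + y 5) / Real.sqrt 2,
    (y 4 - y 0) / Real.sqrt 2,
    (y 0 + y 4) / Real.sqrt 2]

set_option maxHeartbeats 1000000 in
noncomputable def Aiso (r m : ℝ) (hm : 0 < m) (hmr : m < r) :
    EuclideanSpace ℝ (Fin 6) ≃ₗᵢ[ℝ] EuclideanSpace ℝ (Fin 6) := by
  have hq : (0:ℝ) < r^2 + m^2 := by positivity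
  have hq2 : Real.sqrt (r^2 + m^2) ^ 2 = r^2 + m^2 := Real.sq_sqrt hq.le
  have hqne : Real.sqrt (r^2 + m^2) ≠ 0 := by positivity
  have h2 : Real.sqrt 2 ^ 2 = 2 := Real.sq_sqrt (by norm_num)
  have h2ne : Real.sqrt 2 ≠ 0 := by positivity
  refine LinearEquiv.isometryOfInner
    { toFun := Afun r m
      invFun := Ainv r m
      map_add' := fun x y => by
        ext i
        fin_cases i <;>
          simp only [Afun, fe0, fe1, fe2, fe3, fe4, fe5, PiLp.add_apply] <;>
          norm_num [Matrix.cons_val_succ, cv0, cv1, cv2, cv3, cv4, cv5] <;> ring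
      map_smul' := fun c x => by
        ext i
        fin_cases i <;>
          simp only [Afun, fe0, fe1, fe2, fe3, fe4, fe5, PiLp.smul_apply, smul_eq_mul,
            RingHom.id_apply] <;>
          norm_num [Matrix.cons_val_succ, cv0, cv1, cv2, cv3, cv4, cv5] <;> ring
      left_inv := fun x => by
        ext i
        fin_cases i <;>
          simp only [Afun, Ainv, fe0, fe1, fe2, fe3, fe4, fe5] <;>
          norm_num [Matrix.cons_val_succ, cv0, cv1, cv2, cv3, cv4, cv5] <;> field_simp <;>
            rw [Real.sq_sqrt (by positivity)] <;> ring
      right_inv := fun y => by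
        ext i
        fin_cases i <;>
          simp only [Afun, Ainv, fe0, fe1, fe2, fe3, fe4, fe5] <;>
          norm_num [Matrix.cons_val_succ, cv0, cv1, cv2, cv3, cv4, cv5] <;> field_simp <;>
            rw [Real.sq_sqrt (by positivity)] <;> ring }
    fun x y => by
      simp only [LinearEquiv.coe_mk, Equiv.coe_fn_mk]
      simp only [PiLp.inner_apply, RCLike.inner_apply, conj_trivial, Fin.sum_univ_six, Afun,
          PiLp.toLp_apply]
      unfold Afun
      norm_num [Matrix.cons_val_succ, cv0, cv1, cv2, cv3, cv4, cv5]
      field_simp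
      rw [hq2, h2]
      ring_nf

lemma Aiso_apply (hm : 0 < m) (hmr : m < r) (x : EuclideanSpace ℝ (Fin 6)) :
    Aiso r m hm hmr x = Afun r m x := rfl

end BipolarAux

open BipolarAux

set_option maxHeartbeats 1000000 in
lemma BipolarAux.key {r m : ℝ} (hm : 0 < m) (hmr : m < r) (u v : ℝ) :
    genLawson (r - m) 0 (r + m) (u, yfun r m v)
      = Afun r m (bipolarLawson r m (u, v)) := by
  have hr : 0 < r := hm.trans hmr
  have hrm : 0 < r * m := mul_pos hr hm
  have hrpm : 0 < r + m := by linarith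
  have hR := Rpos hm hmr v
  have hRs : (0:ℝ) < Real.sqrt (r^2 * cos v ^ 2 + m^2 * sin v ^ 2) := Real.sqrt_pos.2 hR
  have hRs2 : Real.sqrt (r^2 * cos v ^ 2 + m^2 * sin v ^ 2) ^ 2
      = r^2 * cos v ^ 2 + m^2 * sin v ^ 2 := Real.sq_sqrt hR.le
  have h2 : Real.sqrt 2 ^ 2 = 2 := Real.sq_sqrt (by norm_num)
  have h2p : (0:ℝ) < Real.sqrt 2 := by positivity
  have hq : (0:ℝ) < r^2 + m^2 := by positivity
  have hqs : (0:ℝ) < Real.sqrt (r^2 + m^2) := Real.sqrt_pos.2 hq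
  have hq2 : Real.sqrt (r^2 + m^2) ^ 2 = r^2 + m^2 := Real.sq_sqrt hq.le
  have e1 : ((0:ℝ)^2 + (r+m)^2 - (r-m)^2) / (2 * ((r+m)^2 - (r-m)^2)) = 2⁻¹ := by
    rw [div_eq_iff (by nlinarith)]; ring
  have e2 : ((r-m)^2 + (r+m)^2 - (0:ℝ)^2) / (2 * ((r+m)^2 - (0:ℝ)^2))
      = (r^2 + m^2) / (r+m)^2 := by
    rw [div_eq_div_iff (by nlinarith) (by positivity)]; ring
  have e3 : ((r+m)^2 - (r-m)^2 - (0:ℝ)^2) / (2 * ((r+m)^2 - (0:ℝ)^2))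
      = 2*r*m / (r+m)^2 := by
    rw [div_eq_div_iff (by nlinarith) (by positivity)]; ring
  have eK1 : Real.sqrt (((0:ℝ)^2 + (r+m)^2 - (r-m)^2) / (2 * ((r+m)^2 - (r-m)^2)))
      = (Real.sqrt 2)⁻¹ := by rw [e1, Real.sqrt_inv]
  have eK2 : Real.sqrt (((r-m)^2 + (r+m)^2 - (0:ℝ)^2) / (2 * ((r+m)^2 - (0:ℝ)^2)))
      = Real.sqrt (r^2 + m^2) / (r+m) := by
    rw [e2, Real.sqrt_div (by positivity), Real.sqrt_sq hrpm.le]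
  have eX : (0:ℝ) ≤ r * cos v ^ 2 + m * sin v ^ 2 := by positivity
  have eKS : Real.sqrt (((r+m)^2 - (r-m)^2 - (0:ℝ)^2) / (2 * ((r+m)^2 - (0:ℝ)^2)))
        * Real.sqrt (1 - ((0:ℝ)^2 - (r-m)^2) / ((r+m)^2 - (r-m)^2) * Real.sin (yfun r m v) ^ 2)
      = (r * cos v ^ 2 + m * sin v ^ 2)
          / (Real.sqrt 2 * Real.sqrt (r^2 * cos v ^ 2 + m^2 * sin v ^ 2)) := by
    rw [← Real.sqrt_mul (by rw [e3]; exact div_nonneg (by nlinarith) (by positivity))]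
    rw [show (((r+m)^2 - (r-m)^2 - (0:ℝ)^2) / (2 * ((r+m)^2 - (0:ℝ)^2)))
        * (1 - ((0:ℝ)^2 - (r-m)^2) / ((r+m)^2 - (r-m)^2) * Real.sin (yfun r m v) ^ 2)
        = (r * cos v ^ 2 + m * sin v ^ 2)^2
            / (2 * (r^2 * cos v ^ 2 + m^2 * sin v ^ 2)) from ?_]
    · rw [Real.sqrt_div (by positivity), Real.sqrt_sq eX, Real.sqrt_mul (by norm_num)]
    · rw [sin_yfun hm hmr, div_pow, Real.sq_sqrt hR.le]
      have h4 : ((r+m)^2 - (r-m)^2 : ℝ) = 4*(r*m) := by ring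
      field_simp [hR.ne', hrm.ne', hrpm.ne', h4]
      linear_combination (-(16*r^2*m^2*(r^2*Real.cos v^2+m^2*Real.sin v^2)))
        * sin_sq_add_cos_sq v
  ext i
  fin_cases i
  all_goals
    simp only [genLawson, bipolarLawson, Afun, fe0, fe1, fe2, fe3, fe4, fe5,
      cv0, cv1, cv2, cv3, cv4, cv5, Pi.smul_apply, smul_eq_mul,
        PiLp.toLp_apply, PiLp.smul_apply]
  · rw [eK1, sin_yfun hm hmr, show (r-m)*u = r*u - m*u by ring, Real.cos_sub]
    field_simp
    ring
  · rw [eK1, sin_yfun hm hmr, show (r-m)*u = r*u - m*u by ring, Real.sin_sub]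
    field_simp
    ring
  · rw [eK2, cos_yfun hm hmr, zero_mul, Real.cos_zero]
    field_simp
    linear_combination (sin v * cos v) * hq2
  · rw [zero_mul, Real.sin_zero]
    field_simp
    ring
  · rw [mul_right_comm, eKS, show (r+m)*u = r*u + m*u by ring, Real.cos_add]
    field_simp
    ring
  · rw [mul_right_comm, eKS, show (r+m)*u = r*u + m*u by ring, Real.sin_add]
    field_simp
    ring

/-- For coprime integers `r > m > 0` with `rm` even, the bipolar Lawson torus
`τ̃_{r,m}` is isometric to the generalized Lawson surface `T_{r−m,0,r+m}`: there is
a smooth diffeomorphism `φ` of `ℝ²` such that `F_{r−m,0,r+m} ∘ φ` and `Ĩ_{r,m}`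
induce the same first fundamental form. -/
theorem bipolarLawson_isometric_genLawson_even (r m : ℤ) (hm : 0 < m) (hrm : m < r)
    (hcop : IsCoprime r m) (heven : Even (r * m)) :
    ∃ φ : (ℝ × ℝ) ≃ (ℝ × ℝ), ContDiff ℝ (⊤ : ℕ∞) (φ : ℝ × ℝ → ℝ × ℝ) ∧
      ContDiff ℝ (⊤ : ℕ∞) (φ.symm : ℝ × ℝ → ℝ × ℝ) ∧
      ∀ (p : ℝ × ℝ) (v w : ℝ × ℝ),
        ⟪fderiv ℝ (genLawson ((r : ℝ) - m) 0 ((r : ℝ) + m) ∘ φ) p v,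
          fderiv ℝ (genLawson ((r : ℝ) - m) 0 ((r : ℝ) + m) ∘ φ) p w⟫
        = ⟪fderiv ℝ (bipolarLawson r m) p v, fderiv ℝ (bipolarLawson r m) p w⟫ := by
  have hM : (0:ℝ) < (m:ℝ) := by exact_mod_cast hm
  have hMR : ((m:ℝ)) < (r:ℝ) := by exact_mod_cast hrm
  refine ⟨(Equiv.refl ℝ).prodCongr (yHomeo (r:ℝ) (m:ℝ) hM hMR).toEquiv, ?_, ?_, ?_⟩
  · have hcoe : ⇑((Equiv.refl ℝ).prodCongr (yHomeo (r:ℝ) (m:ℝ) hM hMR).toEquiv)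
        = fun p : ℝ × ℝ => (p.1, yfun (r:ℝ) (m:ℝ) p.2) := by
      funext p; simp [Equiv.prodCongr_apply, yHomeo_apply hM hMR, Prod.map]
    rw [hcoe]
    exact contDiff_fst.prodMk ((yfun_contDiff hM hMR).comp contDiff_snd)
  · have hcoe : ⇑((Equiv.refl ℝ).prodCongr (yHomeo (r:ℝ) (m:ℝ) hM hMR).toEquiv).symm
        = fun p : ℝ × ℝ => (p.1, (yHomeo (r:ℝ) (m:ℝ) hM hMR).symm p.2) := by
      funext p; simp [Equiv.prodCongr_symm, Equiv.prodCongr_apply, Prod.map]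
    rw [hcoe]
    exact contDiff_fst.prodMk ((yHomeo_symm_contDiff hM hMR).comp contDiff_snd)
  · intro p v w
    have hfun : genLawson ((r:ℝ) - m) 0 ((r:ℝ) + m)
          ∘ ⇑((Equiv.refl ℝ).prodCongr (yHomeo (r:ℝ) (m:ℝ) hM hMR).toEquiv)
        = ⇑(Aiso (r:ℝ) (m:ℝ) hM hMR) ∘ bipolarLawson (r:ℝ) (m:ℝ) := by
      funext q
      have happ : (((Equiv.refl ℝ).prodCongr (yHomeo (r:ℝ) (m:ℝ) hM hMR).toEquiv) q)
          = (q.1, yfun (r:ℝ) (m:ℝ) q.2) := by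
        simp [Equiv.prodCongr_apply, yHomeo_apply hM hMR, Prod.map]
      rw [Function.comp_apply, Function.comp_apply, happ, BipolarAux.key hM hMR q.1 q.2,
        Aiso_apply]
    rw [hfun, LinearIsometryEquiv.comp_fderiv]
    simp only [ContinuousLinearMap.coe_comp', Function.comp_apply,
      LinearIsometryEquiv.coe_coe'']
    exact (Aiso (r:ℝ) (m:ℝ) hM hMR).inner_map_map _ _
end

section
/- Let r > m > 0 be real numbers. For all (u,v) ∈ ℝ², the point Ĩ_{r,m}(u,v) ∈ ℝ⁶ has Euclidean norm 1, and its first two coordinates satisfy r·Ĩ₁(u,v) + m·Ĩ₂(u,v) = 0. Consequently the bipolar Lawson surface τ̃_{r,m} lies in the intersection of the unit sphere S⁵ with a hyperplane through the origin, i.e., in an equatorial 4-sphere S⁴ ⊂ S⁵. -/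
/-!
Before normalization, the last four coordinates of `Ĩ_{r,m}(u,v)` are the image of the pair
`(r cos² v, m sin² v)` under a map `ℝ² → ℝ⁴` built from the rotations by `m u` and `r u`, whose
cross terms cancel, so it is an isometry; the first two coordinates contribute
`(r² + m²) sin² v cos² v`. Hence the unnormalized vector has squared norm
`r² cos² v + m² sin² v`, which is exactly the square of the normalizing factor, and it is nonzero
because `r, m ≠ 0`. The hyperplane equation only involves the first two coordinates,
`−m sin v cos v` and `r sin v cos v`.
-/

open Real

open scoped RealInnerProductSpace

theorem sum_sq_rotated_pair (a b α β : ℝ) :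
    (-(a * sin β * cos α) - b * sin α * cos β) ^ 2
      + (a * cos β * sin α + b * cos α * sin β) ^ 2
      + (-(a * sin β * sin α) + b * cos α * cos β) ^ 2
      + (a * cos β * cos α - b * sin α * sin β) ^ 2 = a ^ 2 + b ^ 2 := by
  linear_combination (a ^ 2 + b ^ 2) * (sin α ^ 2 + cos α ^ 2) * sin_sq_add_cos_sq β
    + (a ^ 2 + b ^ 2) * sin_sq_add_cos_sq α

theorem sq_mul_cos_sq_add_sq_mul_sin_sq_pos {a b : ℝ} (ha : a ≠ 0) (hb : b ≠ 0) (v : ℝ) :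
    0 < a ^ 2 * cos v ^ 2 + b ^ 2 * sin v ^ 2 := by
  by_cases hcos : cos v = 0
  · have hsin : sin v ≠ 0 := fun hsin => by simpa [hsin, hcos] using sin_sq_add_cos_sq v
    exact add_pos_of_nonneg_of_pos (by positivity) (by positivity)
  · exact add_pos_of_pos_of_nonneg (by positivity) (by positivity)

namespace bipolarLawson

variable (r m u v : ℝ)

noncomputable def numerator : EuclideanSpace ℝ (Fin 6) :=
  WithLp.toLp 2 ![-(m * sin v * cos v),
    r * sin v * cos v,
    -(r * cos v ^ 2 * sin (m * u) * cos (r * u)) - m * sin v ^ 2 * sin (r * u) * cos (m * u),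
    r * cos v ^ 2 * cos (m * u) * sin (r * u) + m * sin v ^ 2 * cos (r * u) * sin (m * u),
    -(r * cos v ^ 2 * sin (m * u) * sin (r * u)) + m * sin v ^ 2 * cos (r * u) * cos (m * u),
    r * cos v ^ 2 * cos (m * u) * cos (r * u) - m * sin v ^ 2 * sin (r * u) * sin (m * u)]

theorem eq_inv_sqrt_smul_numerator :
    bipolarLawson r m (u, v) =
      (√(r ^ 2 * cos v ^ 2 + m ^ 2 * sin v ^ 2))⁻¹ • numerator r m u v :=
  rfl

theorem norm_sq_numerator :
    ‖numerator r m u v‖ ^ 2 = r ^ 2 * cos v ^ 2 + m ^ 2 * sin v ^ 2 := by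
  rw [EuclideanSpace.real_norm_sq_eq, Fin.sum_univ_six]
  simp only [numerator, PiLp.toLp_apply, Matrix.cons_val]
  linear_combination sum_sq_rotated_pair (r * cos v ^ 2) (m * sin v ^ 2) (r * u) (m * u)
    + (r ^ 2 * cos v ^ 2 + m ^ 2 * sin v ^ 2) * sin_sq_add_cos_sq v

theorem numerator_ne_zero (hr : r ≠ 0) (hm : m ≠ 0) : numerator r m u v ≠ 0 := by
  intro h
  have := norm_sq_numerator r m u v
  rw [h, norm_zero, zero_pow two_ne_zero] at this
  exact (sq_mul_cos_sq_add_sq_mul_sin_sq_pos hr hm v).ne this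

theorem eq_inv_norm_smul_numerator :
    bipolarLawson r m (u, v) = ‖numerator r m u v‖⁻¹ • numerator r m u v := by
  rw [eq_inv_sqrt_smul_numerator, ← norm_sq_numerator, sqrt_sq (norm_nonneg _)]

end bipolarLawson

/-- `Ĩ_{r,m}(u,v)` has norm 1 and `r·Ĩ₁ + m·Ĩ₂ = 0`: the bipolar Lawson surface
`τ̃_{r,m}` lies in an equatorial 4-sphere `S⁴ ⊂ S⁵`. -/
theorem bipolarLawson_mem_equatorial_sphere (r m : ℝ) (hm : 0 < m) (hrm : m < r) (u v : ℝ) :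
    ‖bipolarLawson r m (u, v)‖ = 1 ∧
    r * bipolarLawson r m (u, v) 0 + m * bipolarLawson r m (u, v) 1 = 0 := by
  constructor
  · rw [bipolarLawson.eq_inv_norm_smul_numerator]
    exact norm_smul_inv_norm (bipolarLawson.numerator_ne_zero r m u v (by linarith) hm.ne')
  · simp only [bipolarLawson.eq_inv_sqrt_smul_numerator, bipolarLawson.numerator,
      PiLp.smul_apply, Matrix.cons_val, smul_eq_mul]
    ring
end

section
/- Let r > m > 0 be real numbers. For all (u,v) ∈ ℝ², writing D(v) = r² − (r²−m²) sin²v (which is positive), the first fundamental form of the bipolar Lawson immersion Ĩ_{r,m} is given by ⟨∂_u Ĩ(u,v), ∂_u Ĩ(u,v)⟩ = (D(v)² + r²m²)/D(v), ⟨∂_u Ĩ(u,v), ∂_v Ĩ(u,v)⟩ = 0, and ⟨∂_v Ĩ(u,v), ∂_v Ĩ(u,v)⟩ = (D(v)² + r²m²)/D(v)². -/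
/-!
`Ĩ_{r,m}` is the radial projection `W / ‖W‖` of the explicit map `W = lawsonCone r m`, whose
squared norm is `D(v) = r² − (r² − m²) sin² v`. The differential of `x ↦ x / ‖x‖` is `‖x‖⁻¹` times
the orthogonal projection onto `x^⊥`, so the first fundamental form of `Ĩ` is
`(⟪W_a, W_b⟫ − ⟪W, W_a⟫ ⟪W, W_b⟫ / ‖W‖²) / ‖W‖²`. The inner products of `W`, `W_u`, `W_v` are
trigonometric identities: `W_u` is orthogonal to `W` and `W_v`, `‖W_u‖² = D² + r²m²`,
`‖W_v‖² = r² + m²` and `⟪W, W_v⟫ = −(r² − m²) sin v cos v`.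
-/

open Real

open scoped RealInnerProductSpace

section RadialProjection

variable {E : Type*} [NormedAddCommGroup E] [InnerProductSpace ℝ E]

theorem HasDerivAt.inv_norm_smul {γ : ℝ → E} {γ' : E} {t : ℝ} (hγ : HasDerivAt γ γ' t)
    (h0 : γ t ≠ 0) :
    HasDerivAt (fun s => ‖γ s‖⁻¹ • γ s) (‖γ t‖⁻¹ • γ' - (⟪γ t, γ'⟫ / ‖γ t‖ ^ 3) • γ t) t := by
  have hn : 0 < ‖γ t‖ := norm_pos_iff.2 h0
  have hnorm : HasDerivAt (fun s => ‖γ s‖) (⟪γ t, γ'⟫ / ‖γ t‖) t := by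
    have h := hγ.norm_sq.sqrt (by positivity)
    simp only [sqrt_sq (norm_nonneg _)] at h
    convert h using 1
    field_simp
  refine ((hnorm.inv hn.ne').fun_smul hγ).congr_deriv ?_
  rw [sub_eq_add_neg, ← neg_smul]
  congr 2
  field_simp

theorem inner_inv_norm_smul_sub_smul {x : E} (hx : x ≠ 0) (a b : E) :
    ⟪‖x‖⁻¹ • a - (⟪x, a⟫ / ‖x‖ ^ 3) • x, ‖x‖⁻¹ • b - (⟪x, b⟫ / ‖x‖ ^ 3) • x⟫ =
      (⟪a, b⟫ - ⟪x, a⟫ * ⟪x, b⟫ / ‖x‖ ^ 2) / ‖x‖ ^ 2 := by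
  have hn : ‖x‖ ≠ 0 := norm_ne_zero_iff.2 hx
  simp only [inner_sub_left, inner_sub_right, real_inner_smul_left, real_inner_smul_right,
    real_inner_self_eq_norm_sq, real_inner_comm a x, real_inner_comm b x]
  field_simp
  ring

end RadialProjection

section Partials

variable {E : Type*} [NormedAddCommGroup E] [NormedSpace ℝ E] {f : ℝ × ℝ → E} {f' : E} {u v : ℝ}

theorem DifferentiableAt.fderiv_apply_one_zero (hf : DifferentiableAt ℝ f (u, v))
    (h : HasDerivAt (fun t => f (t, v)) f' u) : fderiv ℝ f (u, v) (1, 0) = f' :=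
  (hf.hasFDerivAt.comp_hasDerivAt u ((hasDerivAt_id u).prodMk (hasDerivAt_const u v))).unique h

theorem DifferentiableAt.fderiv_apply_zero_one (hf : DifferentiableAt ℝ f (u, v))
    (h : HasDerivAt (fun t => f (u, t)) f' v) : fderiv ℝ f (u, v) (0, 1) = f' :=
  (hf.hasFDerivAt.comp_hasDerivAt v ((hasDerivAt_const v u).prodMk (hasDerivAt_id v))).unique h

end Partials

theorem hasDerivAt_euclidean {ι : Type*} [Fintype ι] {f : ℝ → EuclideanSpace ℝ ι}
    {f' : EuclideanSpace ℝ ι} {x : ℝ} :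
    HasDerivAt f f' x ↔ ∀ i, HasDerivAt (fun t => f t i) (f' i) x := by
  refine ⟨fun h i => (PiLp.hasFDerivAt_apply (𝕜 := ℝ) 2 (f x) i).comp_hasDerivAt x h, fun h => ?_⟩
  exact (PiLp.hasFDerivAt_toLp 2 _).comp_hasDerivAt x (hasDerivAt_pi.2 h)

theorem inner_toLp_fin_six (a₀ a₁ a₂ a₃ a₄ a₅ b₀ b₁ b₂ b₃ b₄ b₅ : ℝ) :
    ⟪(!₂[a₀, a₁, a₂, a₃, a₄, a₅] : EuclideanSpace ℝ (Fin 6)), !₂[b₀, b₁, b₂, b₃, b₄, b₅]⟫ =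
      a₀ * b₀ + a₁ * b₁ + a₂ * b₂ + a₃ * b₃ + a₄ * b₄ + a₅ * b₅ := by
  simp only [PiLp.inner_apply, RCLike.inner_apply, conj_trivial, Fin.sum_univ_six, Fin.isValue,
    Matrix.cons_val_zero, Matrix.cons_val_one, Matrix.cons_val]
  ring

noncomputable def lawsonCone (r m : ℝ) (p : ℝ × ℝ) : EuclideanSpace ℝ (Fin 6) :=
  !₂[-(m * sin p.2 * cos p.2),
    r * sin p.2 * cos p.2,
    -(r * cos p.2 ^ 2 * sin (m * p.1) * cos (r * p.1)) - m * sin p.2 ^ 2 * sin (r * p.1) * cos (m * p.1),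
    r * cos p.2 ^ 2 * cos (m * p.1) * sin (r * p.1) + m * sin p.2 ^ 2 * cos (r * p.1) * sin (m * p.1),
    -(r * cos p.2 ^ 2 * sin (m * p.1) * sin (r * p.1)) + m * sin p.2 ^ 2 * cos (r * p.1) * cos (m * p.1),
    r * cos p.2 ^ 2 * cos (m * p.1) * cos (r * p.1) - m * sin p.2 ^ 2 * sin (r * p.1) * sin (m * p.1)]

noncomputable def lawsonConeDerivU (r m : ℝ) (p : ℝ × ℝ) : EuclideanSpace ℝ (Fin 6) :=
  !₂[0, 0,
    (r ^ 2 * cos p.2 ^ 2 + m ^ 2 * sin p.2 ^ 2) * sin (m * p.1) * sin (r * p.1)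
      - r * m * cos (m * p.1) * cos (r * p.1),
    (r ^ 2 * cos p.2 ^ 2 + m ^ 2 * sin p.2 ^ 2) * cos (m * p.1) * cos (r * p.1)
      - r * m * sin (m * p.1) * sin (r * p.1),
    -((r ^ 2 * cos p.2 ^ 2 + m ^ 2 * sin p.2 ^ 2) * sin (m * p.1) * cos (r * p.1))
      - r * m * cos (m * p.1) * sin (r * p.1),
    -((r ^ 2 * cos p.2 ^ 2 + m ^ 2 * sin p.2 ^ 2) * cos (m * p.1) * sin (r * p.1))
      - r * m * sin (m * p.1) * cos (r * p.1)]

noncomputable def lawsonConeDerivV (r m : ℝ) (p : ℝ × ℝ) : EuclideanSpace ℝ (Fin 6) :=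
  !₂[-(m * (cos p.2 ^ 2 - sin p.2 ^ 2)),
    r * (cos p.2 ^ 2 - sin p.2 ^ 2),
    2 * sin p.2 * cos p.2 * (r * sin (m * p.1) * cos (r * p.1) - m * sin (r * p.1) * cos (m * p.1)),
    2 * sin p.2 * cos p.2 * (m * cos (r * p.1) * sin (m * p.1) - r * cos (m * p.1) * sin (r * p.1)),
    2 * sin p.2 * cos p.2 * (r * sin (m * p.1) * sin (r * p.1) + m * cos (r * p.1) * cos (m * p.1)),
    -(2 * sin p.2 * cos p.2 * (r * cos (m * p.1) * cos (r * p.1) + m * sin (r * p.1) * sin (m * p.1)))]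

section Gram

variable (r m : ℝ) (p : ℝ × ℝ)

theorem inner_lawsonCone_self :
    ⟪lawsonCone r m p, lawsonCone r m p⟫ = r ^ 2 - (r ^ 2 - m ^ 2) * sin p.2 ^ 2 := by
  simp only [lawsonCone, inner_toLp_fin_six]
  grind [sin_sq_add_cos_sq]

theorem inner_lawsonCone_derivU : ⟪lawsonCone r m p, lawsonConeDerivU r m p⟫ = 0 := by
  simp only [lawsonCone, lawsonConeDerivU, inner_toLp_fin_six]
  ring

theorem inner_lawsonCone_derivV :
    ⟪lawsonCone r m p, lawsonConeDerivV r m p⟫ = -((r ^ 2 - m ^ 2) * sin p.2 * cos p.2) := by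
  simp only [lawsonCone, lawsonConeDerivV, inner_toLp_fin_six]
  grind [sin_sq_add_cos_sq]

theorem inner_lawsonConeDerivU_self :
    ⟪lawsonConeDerivU r m p, lawsonConeDerivU r m p⟫ =
      (r ^ 2 - (r ^ 2 - m ^ 2) * sin p.2 ^ 2) ^ 2 + r ^ 2 * m ^ 2 := by
  simp only [lawsonConeDerivU, inner_toLp_fin_six]
  grind [sin_sq_add_cos_sq]

theorem inner_lawsonConeDerivU_derivV : ⟪lawsonConeDerivU r m p, lawsonConeDerivV r m p⟫ = 0 := by
  simp only [lawsonConeDerivU, lawsonConeDerivV, inner_toLp_fin_six]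
  ring

theorem inner_lawsonConeDerivV_self :
    ⟪lawsonConeDerivV r m p, lawsonConeDerivV r m p⟫ = r ^ 2 + m ^ 2 := by
  simp only [lawsonConeDerivV, inner_toLp_fin_six]
  grind [sin_sq_add_cos_sq]

end Gram

theorem differentiable_lawsonCone (r m : ℝ) : Differentiable ℝ (lawsonCone r m) := by
  refine differentiable_euclidean.2 fun i => ?_
  fin_cases i <;> simp only [lawsonCone, Fin.zero_eta, Fin.mk_one, Fin.reduceFinMk, Fin.isValue,
      Matrix.cons_val_zero, Matrix.cons_val_one, Matrix.cons_val] <;> fun_prop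

theorem hasDerivAt_lawsonCone_fst (r m u v : ℝ) :
    HasDerivAt (fun t => lawsonCone r m (t, v)) (lawsonConeDerivU r m (u, v)) u := by
  refine hasDerivAt_euclidean.2 fun i => ?_
  fin_cases i <;>
    simp only [lawsonCone, lawsonConeDerivU, Fin.zero_eta, Fin.mk_one, Fin.reduceFinMk,
      Fin.isValue, Matrix.cons_val_zero, Matrix.cons_val_one, Matrix.cons_val] <;>
    refine (DifferentiableAt.hasDerivAt (by fun_prop)).congr_deriv ?_ <;>
    simp (disch := fun_prop) only [deriv_fun_add, deriv_fun_sub, deriv.fun_neg', deriv_fun_mul,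
      deriv_const', deriv_fun_pow, deriv_const_mul_id', _root_.deriv_sin, _root_.deriv_cos] <;>
    grind [sin_sq_add_cos_sq]

theorem hasDerivAt_lawsonCone_snd (r m u v : ℝ) :
    HasDerivAt (fun t => lawsonCone r m (u, t)) (lawsonConeDerivV r m (u, v)) v := by
  refine hasDerivAt_euclidean.2 fun i => ?_
  fin_cases i <;>
    simp only [lawsonCone, lawsonConeDerivV, Fin.zero_eta, Fin.mk_one, Fin.reduceFinMk,
      Fin.isValue, Matrix.cons_val_zero, Matrix.cons_val_one, Matrix.cons_val] <;>
    refine (DifferentiableAt.hasDerivAt (by fun_prop)).congr_deriv ?_ <;>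
    simp (disch := fun_prop) only [deriv_fun_add, deriv_fun_sub, deriv.fun_neg', deriv_fun_mul,
      deriv_const', deriv_fun_pow, _root_.deriv_sin, _root_.deriv_cos, Real.deriv_sin,
      Real.deriv_cos] <;>
    ring

theorem bipolarLawson_eq_inv_norm_smul (r m : ℝ) :
    bipolarLawson r m = fun p => ‖lawsonCone r m p‖⁻¹ • lawsonCone r m p := by
  funext p
  have hE : r ^ 2 * cos p.2 ^ 2 + m ^ 2 * sin p.2 ^ 2 = ⟪lawsonCone r m p, lawsonCone r m p⟫ := by
    rw [inner_lawsonCone_self]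
    linear_combination r ^ 2 * cos_sq_add_sin_sq p.2
  rw [norm_eq_sqrt_real_inner, ← hE]
  rfl

theorem fderiv_bipolarLawson_one_zero {r m u v : ℝ} (h0 : lawsonCone r m (u, v) ≠ 0) :
    fderiv ℝ (bipolarLawson r m) (u, v) (1, 0) =
      ‖lawsonCone r m (u, v)‖⁻¹ • lawsonConeDerivU r m (u, v) -
        (⟪lawsonCone r m (u, v), lawsonConeDerivU r m (u, v)⟫ / ‖lawsonCone r m (u, v)‖ ^ 3) •
          lawsonCone r m (u, v) := by
  have hW := differentiable_lawsonCone r m (u, v)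
  rw [bipolarLawson_eq_inv_norm_smul]
  exact ((hW.norm ℝ h0).inv (norm_ne_zero_iff.2 h0)).smul hW |>.fderiv_apply_one_zero
    ((hasDerivAt_lawsonCone_fst r m u v).inv_norm_smul h0)

theorem fderiv_bipolarLawson_zero_one {r m u v : ℝ} (h0 : lawsonCone r m (u, v) ≠ 0) :
    fderiv ℝ (bipolarLawson r m) (u, v) (0, 1) =
      ‖lawsonCone r m (u, v)‖⁻¹ • lawsonConeDerivV r m (u, v) -
        (⟪lawsonCone r m (u, v), lawsonConeDerivV r m (u, v)⟫ / ‖lawsonCone r m (u, v)‖ ^ 3) •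
          lawsonCone r m (u, v) := by
  have hW := differentiable_lawsonCone r m (u, v)
  rw [bipolarLawson_eq_inv_norm_smul]
  exact ((hW.norm ℝ h0).inv (norm_ne_zero_iff.2 h0)).smul hW |>.fderiv_apply_zero_one
    ((hasDerivAt_lawsonCone_snd r m u v).inv_norm_smul h0)

/-- The first fundamental form of the bipolar Lawson immersion `Ĩ_{r,m}`: with
`D(v) = r² − (r²−m²)sin²v > 0`, one has `⟨∂ᵤĨ,∂ᵤĨ⟩ = (D² + r²m²)/D`,
`⟨∂ᵤĨ,∂ᵥĨ⟩ = 0`, and `⟨∂ᵥĨ,∂ᵥĨ⟩ = (D² + r²m²)/D²`. -/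
theorem bipolarLawson_first_fundamental_form (r m : ℝ) (hm : 0 < m) (hrm : m < r) (u v : ℝ) :
    0 < r^2 - (r^2 - m^2) * Real.sin v ^ 2 ∧
    ⟪fderiv ℝ (bipolarLawson r m) (u, v) (1, 0), fderiv ℝ (bipolarLawson r m) (u, v) (1, 0)⟫
        = ((r^2 - (r^2 - m^2) * Real.sin v ^ 2)^2 + r^2 * m^2)
            / (r^2 - (r^2 - m^2) * Real.sin v ^ 2) ∧
    ⟪fderiv ℝ (bipolarLawson r m) (u, v) (1, 0), fderiv ℝ (bipolarLawson r m) (u, v) (0, 1)⟫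
        = 0 ∧
    ⟪fderiv ℝ (bipolarLawson r m) (u, v) (0, 1), fderiv ℝ (bipolarLawson r m) (u, v) (0, 1)⟫
        = ((r^2 - (r^2 - m^2) * Real.sin v ^ 2)^2 + r^2 * m^2)
            / (r^2 - (r^2 - m^2) * Real.sin v ^ 2)^2 := by
  have hD : 0 < r ^ 2 - (r ^ 2 - m ^ 2) * sin v ^ 2 := by
    have : 0 ≤ (r ^ 2 - m ^ 2) * (1 - sin v ^ 2) :=
      mul_nonneg (by nlinarith) (by linarith [sin_sq_le_one v])
    nlinarith [pow_pos hm 2]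
  have hW : ‖lawsonCone r m (u, v)‖ ^ 2 = r ^ 2 - (r ^ 2 - m ^ 2) * sin v ^ 2 := by
    rw [← real_inner_self_eq_norm_sq, inner_lawsonCone_self]
  have h0 : lawsonCone r m (u, v) ≠ 0 := by
    rintro h
    rw [h, norm_zero] at hW
    linarith
  rw [fderiv_bipolarLawson_one_zero h0, fderiv_bipolarLawson_zero_one h0,
    inner_inv_norm_smul_sub_smul h0, inner_inv_norm_smul_sub_smul h0, inner_inv_norm_smul_sub_smul h0]
  simp only [hW, inner_lawsonCone_derivU, inner_lawsonCone_derivV, inner_lawsonConeDerivU_self,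
    inner_lawsonConeDerivU_derivV, inner_lawsonConeDerivV_self]
  refine ⟨hD, by simp, by simp, ?_⟩
  field_simp
  linear_combination -((r ^ 2 - m ^ 2) ^ 2 * sin v ^ 2) * sin_sq_add_cos_sq v
end
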